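/- If q is an odd prime power, then every arc in PG(2,q) has at most q+1 points. -/

import Mathlib

abbrev PGPoint (F : Type*) [Field F] := Projectivization F (Fin 3 → F)

abbrev PGLine (F : Type*) [Field F] :=
  {l : Submodule F (Fin 3 → F) // Module.finrank F l = 2}

def OnLine {F : Type*} [Field F] (P : PGPoint F) (l : PGLine F) : Prop :=
  P.submodule ≤ l.1

def IsArc {F : Type*} [Field F] (S : Set (PGPoint F)) : Prop :=
  ∀ a ∈ S, ∀ b ∈ S, ∀ c ∈ S, a ≠ b → a ≠ c → b ≠ c →
    ¬ ∃ l : PGLine F, OnLine a l ∧ OnLine b l ∧ OnLine c l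

def IsCompleteArc {F : Type*} [Field F] (S : Set (PGPoint F)) : Prop :=
  IsArc S ∧ ∀ T : Set (PGPoint F), IsArc T → S ⊆ T → S = T

def IsBisecant {F : Type*} [Field F] (K : Set (PGPoint F)) (l : PGLine F) : Prop :=
  Set.ncard {x ∈ K | OnLine x l} = 2

/-! If an arc `S` had `q + 2` points, then from each `P ∈ S` the other `q + 1` points are seen
along distinct lines, and there are only `q + 1` lines through `P`; so every line through a point
of `S` meets `S` in exactly two points. The lines through a point `N ∉ S` then split `S` into
pairs, so `q + 2` is even, which is impossible for odd `q`. -/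

open Module Projectivization
open scoped LinearAlgebra.Projectivization

section LinearAlgebra

variable {K V : Type*} [Field K] [AddCommGroup V] [Module K V]

theorem Projectivization.finrank_submodule_sup {a b : ℙ K V} (hab : a ≠ b) :
    finrank K ↥(a.submodule ⊔ b.submodule) = 2 := by
  have hlt : a.submodule ⊓ b.submodule < a.submodule := by
    refine inf_le_left.lt_of_ne fun h => hab (submodule_injective ?_)
    exact Submodule.eq_of_le_of_finrank_eq (h ▸ inf_le_right)
      (by rw [a.finrank_submodule, b.finrank_submodule])
  have hinf := Submodule.finrank_lt_finrank_of_lt hlt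
  have := Submodule.finrank_sup_add_finrank_inf_eq a.submodule b.submodule
  simp only [finrank_submodule] at this hinf
  omega

theorem Submodule.finrank_comap_mkQ [FiniteDimensional K V] (p : Submodule K V)
    (m : Submodule K (V ⧸ p)) : finrank K (m.comap p.mkQ) = finrank K m + finrank K p := by
  have h := LinearMap.finrank_range_add_finrank_ker (p.mkQ.domRestrict (m.comap p.mkQ))
  rw [LinearMap.range_domRestrict, Submodule.map_comap_eq_of_surjective p.mkQ_surjective,
    LinearMap.ker_domRestrict, Submodule.ker_mkQ,
    (Submodule.comapSubtypeEquivOfLe (p.le_comap_mkQ m)).finrank_eq] at h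
  exact h.symm

theorem Function.Involutive.even_card {α : Type*} [Finite α] {σ : α → α}
    (hσ : Function.Involutive σ) (hfree : ∀ x, σ x ≠ x) : Even (Nat.card α) := by
  classical
  have : Fintype α := Fintype.ofFinite α
  have hmod := Equiv.Perm.card_fixedPoints_modEq (p := 2) (n := 1) (f := σ) (by
    funext x; exact hσ x)
  rw [Nat.card_eq_fintype_card, Nat.even_iff, hmod]
  simp [Function.fixedPoints, Function.IsFixedPt, hfree]

end LinearAlgebra

section ProjectivePlane

variable {F : Type*} [Field F]

noncomputable def lineThrough (a b : PGPoint F) (hab : a ≠ b) : PGLine F :=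
  ⟨a.submodule ⊔ b.submodule, finrank_submodule_sup hab⟩

theorem onLine_lineThrough_left {a b : PGPoint F} (hab : a ≠ b) :
    OnLine a (lineThrough a b hab) := le_sup_left

theorem onLine_lineThrough_right {a b : PGPoint F} (hab : a ≠ b) :
    OnLine b (lineThrough a b hab) := le_sup_right

theorem eq_lineThrough_of_onLine {a b : PGPoint F} (hab : a ≠ b) {l : PGLine F}
    (ha : OnLine a l) (hb : OnLine b l) : l = lineThrough a b hab :=
  Subtype.ext (Submodule.eq_of_le_of_finrank_eq (sup_le ha hb)
    (by rw [l.2, finrank_submodule_sup hab])).symm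

noncomputable def linesThroughEquiv (P : PGPoint F) :
    {m : Submodule F ((Fin 3 → F) ⧸ P.submodule) // finrank F m = 1} ≃
      {l : PGLine F // OnLine P l} where
  toFun m := ⟨⟨m.1.comap P.submodule.mkQ, by
    rw [Submodule.finrank_comap_mkQ, m.2, P.finrank_submodule]⟩, P.submodule.le_comap_mkQ m.1⟩
  invFun l := ⟨l.1.1.map P.submodule.mkQ, by
    have h := Submodule.finrank_comap_mkQ P.submodule (l.1.1.map P.submodule.mkQ)
    rw [Submodule.comap_map_mkQ, sup_eq_right.2 l.2, l.1.2, P.finrank_submodule] at h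
    omega⟩
  left_inv m := Subtype.ext (Submodule.map_comap_eq_of_surjective P.submodule.mkQ_surjective m.1)
  right_inv l := Subtype.ext (Subtype.ext (by
    simp only [Submodule.comap_map_mkQ, sup_eq_right.2 l.2]))

theorem card_linesThrough [Fintype F] (P : PGPoint F) :
    Nat.card {l : PGLine F // OnLine P l} = Fintype.card F + 1 := by
  rw [← Nat.card_congr ((equivSubmodule F _).trans (linesThroughEquiv P)),
    card_of_finrank_two, Nat.card_eq_fintype_card]
  have h := Submodule.finrank_quotient_add_finrank P.submodule
  rw [P.finrank_submodule, Module.finrank_fin_fun] at h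
  omega

theorem card_pgPoint [Fintype F] :
    Nat.card (PGPoint F) = Fintype.card F ^ 2 + Fintype.card F + 1 := by
  rw [card_of_finrank F _ (finrank_fin_fun F), Nat.card_eq_fintype_card]
  simp only [Finset.sum_range_succ, Finset.range_one, Finset.sum_singleton, pow_zero, pow_one]
  ring

end ProjectivePlane

section Arc

variable {F : Type*} [Field F] {S : Set (PGPoint F)}

theorem IsArc.eq_or_eq_of_onLine (hS : IsArc S) {a b c : PGPoint F} (ha : a ∈ S) (hb : b ∈ S)
    (hc : c ∈ S) (hab : a ≠ b) {l : PGLine F} (hla : OnLine a l) (hlb : OnLine b l)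
    (hlc : OnLine c l) : c = a ∨ c = b := by
  by_contra! h
  exact hS a ha b hb c hc hab (Ne.symm h.1) (Ne.symm h.2) ⟨l, hla, hlb, hlc⟩

noncomputable def secantThrough (P : PGPoint F) (Q : ↥(S \ {P})) :
    {l : PGLine F // OnLine P l} :=
  ⟨lineThrough P Q (fun h => Q.2.2 h.symm), onLine_lineThrough_left _⟩

theorem onLine_secantThrough {P : PGPoint F} (Q : ↥(S \ {P})) :
    OnLine Q (secantThrough P Q).1 :=
  onLine_lineThrough_right fun h => Q.2.2 h.symm

theorem IsArc.injective_secantThrough (hS : IsArc S) {P : PGPoint F} (hP : P ∈ S) :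
    Function.Injective (secantThrough (S := S) P) := by
  intro Q R hQR
  have hR : OnLine R (secantThrough P Q).1 := by
    rw [hQR]; exact onLine_secantThrough R
  exact Subtype.ext ((hS.eq_or_eq_of_onLine hP Q.2.1 R.2.1 (fun h => Q.2.2 h.symm)
    (secantThrough P Q).2 (onLine_secantThrough Q) hR).resolve_left R.2.2).symm

theorem IsArc.ncard_le [Fintype F] (hS : IsArc S) : S.ncard ≤ Fintype.card F + 2 := by
  obtain rfl | ⟨P, hP⟩ := S.eq_empty_or_nonempty
  · simp
  have h := Nat.card_le_card_of_injective _ (hS.injective_secantThrough hP)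
  rw [card_linesThrough, Nat.card_coe_set_eq, Set.ncard_sdiff_singleton_of_mem hP] at h
  omega

theorem IsArc.exists_mem_onLine_of_ncard_eq [Fintype F] (hS : IsArc S)
    (hcard : S.ncard = Fintype.card F + 2) {P : PGPoint F} (hP : P ∈ S) {l : PGLine F}
    (hl : OnLine P l) : ∃ Q ∈ S, Q ≠ P ∧ OnLine Q l := by
  have hbij : Function.Bijective (secantThrough (S := S) P) := by
    rw [Nat.bijective_iff_injective_and_card, card_linesThrough, Nat.card_coe_set_eq,
      Set.ncard_sdiff_singleton_of_mem hP, hcard]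
    exact ⟨hS.injective_secantThrough hP, rfl⟩
  obtain ⟨Q, hQ⟩ := hbij.2 ⟨l, hl⟩
  refine ⟨Q, Q.2.1, Q.2.2, ?_⟩
  have hQl := onLine_secantThrough Q
  rwa [hQ] at hQl

theorem IsArc.even_ncard [Finite F] (hS : IsArc S)
    (hsec : ∀ P ∈ S, ∀ l : PGLine F, OnLine P l → ∃ Q ∈ S, Q ≠ P ∧ OnLine Q l)
    {N : PGPoint F} (hN : N ∉ S) : Even S.ncard := by
  have hNQ : ∀ Q : S, N ≠ Q := fun Q h => hN (h ▸ Q.2)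
  -- `σ Q` is the second point of `S` on the line `N Q`
  choose σ hσS hσne hσon using fun Q : S =>
    hsec Q Q.2 (lineThrough N Q (hNQ Q)) (onLine_lineThrough_right _)
  let τ : S → S := fun Q => ⟨σ Q, hσS Q⟩
  have hτ : Function.Involutive τ := by
    intro Q
    have hline : lineThrough N (σ Q) (hNQ (τ Q)) = lineThrough N Q (hNQ Q) :=
      (eq_lineThrough_of_onLine _ (onLine_lineThrough_left _) (hσon Q)).symm
    have hon := hσon (τ Q)
    rw [hline] at hon
    exact Subtype.ext ((hS.eq_or_eq_of_onLine Q.2 (hσS Q) (hσS (τ Q)) (hσne Q).symm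
      (onLine_lineThrough_right _) (hσon Q) hon).resolve_right (hσne (τ Q)))
  rw [← Nat.card_coe_set_eq]
  exact hτ.even_card fun Q h => hσne Q (congrArg Subtype.val h)

end Arc

theorem stmt1 {F : Type*} [Field F] [Fintype F] (q : ℕ) (hq : Fintype.card F = q)
    (hodd : Odd q) (S : Set (PGPoint F)) (hS : IsArc S) : Nat.card S ≤ q + 1 := by
  subst hq
  by_contra! hlt
  rw [Nat.card_coe_set_eq] at hlt
  have hcard : S.ncard = Fintype.card F + 2 := le_antisymm hS.ncard_le hlt
  obtain ⟨N, hN⟩ : ∃ N, N ∉ S := by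
    by_contra! hS_univ
    rw [Set.eq_univ_of_forall hS_univ, Set.ncard_univ, card_pgPoint] at hcard
    nlinarith [Fintype.one_lt_card (α := F)]
  have heven := hS.even_ncard (fun P hP l hl => hS.exists_mem_onLine_of_ncard_eq hcard hP hl) hN
  rw [hcard] at heven
  exact Nat.not_even_iff_odd.2 hodd ((Nat.even_add.1 heven).2 even_two)
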